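/- arXiv:1508.04207 — 4 statements merged into one kernel-verified Lean document; each statement's English description precedes it below -/
import Mathlib

section
/- Let S be a q×q real matrix whose minimal polynomial equals the characteristic polynomial of a matrix β, let σ be a column vector such that (β,σ) is controllable, and let G₁ = blockdiag(β,…,β) (p copies) and G₂ = blockdiag(σ,…,σ) (p copies). If matrices X and Y satisfy XS − G₁X = G₂Y, then Y = 0. -/
open Matrix

/-- Controllability of a single-input pair `(β, σ)`. -/
def IsControllablePair {nβ : ℕ} (β : Matrix (Fin nβ) (Fin nβ) ℝ)
    (σ : Matrix (Fin nβ) (Fin 1) ℝ) : Prop :=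
  (Matrix.of fun i (j : Fin nβ) => ((β ^ (j : ℕ)) * σ) i 0).rank = nβ

/-!
Write `D f = X f(S) - f(β) X`. From `X S = β X + σ y` and `f = x · divX f + f(0)` one gets
`D f = β D (divX f) + σ y (divX f)(S)`, hence, iterating `n = deg P` times for `P = charpoly β`
(so that `divX^[n] P = 1` and `D 1 = 0`),
`D P = ∑_{k < n} β^k σ · y (divX^[k+1] P)(S)`.
Cayley–Hamilton and `P(S) = 0` give `D P = 0`; since the controllability matrix
`[σ, βσ, …, β^{n-1}σ]` is invertible, every `y (divX^[k+1] P)(S)` vanishes, and for `k = n - 1`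
this is `y` itself. The block-diagonal case reduces to one copy at a time.
-/

open Polynomial

theorem Polynomial.coeff_iterate_divX {R : Type*} [Semiring R] (p : R[X]) (k i : ℕ) :
    (divX^[k] p).coeff i = p.coeff (i + k) := by
  induction k generalizing i with
  | zero => rfl
  | succ k ih => rw [Function.iterate_succ_apply', coeff_divX, ih, add_right_comm, add_assoc]

theorem Polynomial.Monic.iterate_divX_natDegree {R : Type*} [Semiring R] {p : R[X]}
    (hp : p.Monic) : divX^[p.natDegree] p = 1 := by
  ext i
  rw [coeff_iterate_divX, coeff_one]
  rcases i with _ | i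
  · simpa using hp.coeff_natDegree
  · exact coeff_eq_zero_of_natDegree_lt (by omega)

section Sylvester

variable {R : Type*} [CommRing R] {m n r : Type*} [Fintype m] [DecidableEq m]
  [Fintype n] [DecidableEq n] [Fintype r]
  {S : Matrix n n R} {β : Matrix m m R} {σ : Matrix m r R} {X : Matrix m n R} {y : Matrix r n R}

theorem mul_aeval_sub_aeval_mul_eq_divX (h : X * S - β * X = σ * y) (f : R[X]) :
    X * aeval S f - aeval β f * X =
      β * (X * aeval S f.divX - aeval β f.divX * X) + σ * (y * aeval S f.divX) := by
  have hXS : X * S = β * X + σ * y := by rw [← h]; abel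
  conv_lhs => rw [← divX_mul_X_add f, mul_comm]
  simp only [map_add, map_mul, aeval_X, aeval_C, Algebra.algebraMap_eq_smul_one, Matrix.mul_add,
    Matrix.add_mul, Matrix.mul_smul, Matrix.smul_mul, Matrix.mul_one, Matrix.one_mul,
    ← Matrix.mul_assoc, hXS]
  simp only [Matrix.mul_sub, Matrix.mul_assoc]
  abel

theorem mul_aeval_sub_aeval_mul_eq_sum (h : X * S - β * X = σ * y) (f : R[X]) (N : ℕ) :
    X * aeval S f - aeval β f * X =
      β ^ N * (X * aeval S (divX^[N] f) - aeval β (divX^[N] f) * X) +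
        ∑ k ∈ Finset.range N, β ^ k * σ * (y * aeval S (divX^[k + 1] f)) := by
  induction N with
  | zero => simp
  | succ N ih =>
    rw [ih, mul_aeval_sub_aeval_mul_eq_divX h, Finset.sum_range_succ,
      Function.iterate_succ_apply', Matrix.mul_add, pow_succ, Matrix.mul_assoc, Matrix.mul_assoc]
    abel

end Sylvester

theorem IsControllablePair.isUnit {nβ : ℕ} {β : Matrix (Fin nβ) (Fin nβ) ℝ}
    {σ : Matrix (Fin nβ) (Fin 1) ℝ} (h : IsControllablePair β σ) :
    IsUnit (Matrix.of fun i (j : Fin nβ) => ((β ^ (j : ℕ)) * σ) i 0) := by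
  refine linearIndependent_cols_iff_isUnit.1 (linearIndependent_iff_card_eq_finrank_span.2 ?_)
  rw [Set.finrank, ← rank_eq_finrank_span_cols, h, Fintype.card_fin]

theorem IsControllablePair.eq_zero_of_sum_eq_zero {nβ q : ℕ} {β : Matrix (Fin nβ) (Fin nβ) ℝ}
    {σ : Matrix (Fin nβ) (Fin 1) ℝ} (h : IsControllablePair β σ)
    {z : Fin nβ → Matrix (Fin 1) (Fin q) ℝ} (hz : ∑ k : Fin nβ, β ^ (k : ℕ) * σ * z k = 0) :
    z = 0 := by
  have hZ : (Matrix.of fun i (j : Fin nβ) => ((β ^ (j : ℕ)) * σ) i 0) *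
      Matrix.of (fun k l => z k 0 l) = 0 := by
    rw [← hz]
    ext i l
    simp [Matrix.mul_apply, Matrix.sum_apply]
  have hZ0 : Matrix.of (fun k l => z k 0 l) = 0 := by
    rw [← nonsing_inv_mul_cancel_left _ (Matrix.of fun k l => z k 0 l)
      ((isUnit_iff_isUnit_det _).1 h.isUnit), hZ, Matrix.mul_zero]
  funext k
  ext i l
  rw [Subsingleton.elim i 0]
  exact congrFun (congrFun hZ0 k) l

theorem Matrix.submatrix_blockDiagonal_mul {α : Type*} [NonUnitalNonAssocSemiring α]
    {m n o l : Type*} [Fintype n] [Fintype o] [DecidableEq o]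
    (M : o → Matrix m n α) (X : Matrix (n × o) l α) (k : o) :
    (blockDiagonal M * X).submatrix (fun i => (i, k)) id =
      M k * X.submatrix (fun j => (j, k)) id := by
  ext i c
  simp [mul_apply, blockDiagonal_apply, Fintype.sum_prod_type]

theorem eq_zero_of_mul_sub_mul_eq_mul {q nβ : ℕ} {S : Matrix (Fin q) (Fin q) ℝ}
    {β : Matrix (Fin nβ) (Fin nβ) ℝ} {σ : Matrix (Fin nβ) (Fin 1) ℝ}
    (hS : aeval S β.charpoly = 0) (hctrb : IsControllablePair β σ)
    {X : Matrix (Fin nβ) (Fin q) ℝ} {y : Matrix (Fin 1) (Fin q) ℝ}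
    (h : X * S - β * X = σ * y) : y = 0 := by
  set P := β.charpoly
  have hdeg : P.natDegree = nβ := by rw [charpoly_natDegree_eq_dim, Fintype.card_fin]
  have hone : divX^[nβ] P = 1 := hdeg ▸ β.charpoly_monic.iterate_divX_natDegree
  have hsum : ∑ k : Fin nβ, β ^ (k : ℕ) * σ * (y * aeval S (divX^[k + 1] P)) = 0 := by
    have := mul_aeval_sub_aeval_mul_eq_sum h P nβ
    rwa [hS, aeval_self_charpoly, hone, map_one, map_one, Matrix.mul_one, Matrix.one_mul,
      sub_self, Matrix.mul_zero, Matrix.zero_mul, sub_self, Matrix.mul_zero, zero_add,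
      ← Fin.sum_univ_eq_sum_range (fun k => β ^ k * σ * (y * aeval S (divX^[k + 1] P))),
      eq_comm] at this
  have hz := hctrb.eq_zero_of_sum_eq_zero hsum
  calc y = y * aeval S (divX^[P.natDegree] P) := by
        rw [β.charpoly_monic.iterate_divX_natDegree, map_one, Matrix.mul_one]
    _ = 0 := by
      cases hd : P.natDegree with
      | zero => rw [Function.iterate_zero_apply, hS, Matrix.mul_zero]
      | succ k => exact congrFun hz ⟨k, by omega⟩

/-- internal model property.  If the characteristic polynomial of `β`
equals the minimal polynomial of `S`, `(β, σ)` is controllable, and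
`G₁ = blockdiag(β,…,β)`, `G₂ = blockdiag(σ,…,σ)` (p copies each), then
`X S − G₁ X = G₂ Y` forces `Y = 0`. -/
theorem stmt0 {q nβ p : ℕ} (S : Matrix (Fin q) (Fin q) ℝ)
    (β : Matrix (Fin nβ) (Fin nβ) ℝ) (σ : Matrix (Fin nβ) (Fin 1) ℝ)
    (hmin : minpoly ℝ S = β.charpoly)
    (hctrb : IsControllablePair β σ)
    (G₁ : Matrix (Fin nβ × Fin p) (Fin nβ × Fin p) ℝ)
    (G₂ : Matrix (Fin nβ × Fin p) (Fin 1 × Fin p) ℝ)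
    (hG₁ : G₁ = Matrix.blockDiagonal fun _ : Fin p => β)
    (hG₂ : G₂ = Matrix.blockDiagonal fun _ : Fin p => σ)
    (X : Matrix (Fin nβ × Fin p) (Fin q) ℝ)
    (Y : Matrix (Fin 1 × Fin p) (Fin q) ℝ)
    (hXY : X * S - G₁ * X = G₂ * Y) :
    Y = 0 := by
  have hS : aeval S β.charpoly = 0 := hmin ▸ minpoly.aeval ℝ S
  have hcopy : ∀ k : Fin p, Y.submatrix (fun i => (i, k)) id = 0 := fun k =>
    eq_zero_of_mul_sub_mul_eq_mul hS hctrb (X := X.submatrix (fun i => (i, k)) id) <| by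
      have := congrArg (·.submatrix (fun i => (i, k)) id) hXY
      rwa [submatrix_sub, Pi.sub_apply, Pi.sub_apply, hG₁, hG₂, submatrix_blockDiagonal_mul,
        submatrix_blockDiagonal_mul, submatrix_mul X S _ id id Function.bijective_id,
        submatrix_id_id] at this
  ext ⟨i, k⟩ l
  exact congrFun (congrFun (hcopy k) i) l
end

section
/- Suppose all eigenvalues of S ∈ R^{q×q} lie on the imaginary axis, and suppose the closed-loop matrix family defines an exponentially stable delay system in the sense that the characteristic function det(λI − A₀ − A₁e^{−λτ}) has all roots with negative real part. Then for any matrix B of appropriate dimension there exists a unique matrix X satisfying XS = A₀X + A₁X e^{−Sτ} + B. -/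
/-!
Let `L X = X S - A₀ X - A₁ X e^{-τS}`. Since `S` commutes with `e^{-τS}`, right multiplication by
`S` commutes with `L`, so over `ℂ` a nonzero kernel of `L` would contain a left eigenmatrix
`X S = μ X` with `μ ∈ σ(S) ⊂ iℝ`. Then `X e^{-τS} = e^{-μτ} X`, and `L X = 0` becomes
`(μ - A₀ - e^{-μτ} A₁) X = 0`, contradicting stability. Hence `L` is injective over `ℂ`, so also
over `ℝ`, and an injective endomorphism of a finite-dimensional space is bijective.
-/

open Matrix NormedSpace

theorem Module.End.exists_hasEigenvector_mem_ker_of_commute {K V : Type*} [Field K]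
    [IsAlgClosed K] [AddCommGroup V] [Module K V] [FiniteDimensional K V]
    {f g : Module.End K V} (hfg : Commute f g) {v : V} (hv : v ∈ LinearMap.ker f) (hv0 : v ≠ 0) :
    ∃ μ, ∃ w ∈ LinearMap.ker f, g.HasEigenvector μ w := by
  have hmaps : Set.MapsTo g (LinearMap.ker f) (LinearMap.ker f) := fun w hw => by
    simp only [SetLike.mem_coe, LinearMap.mem_ker] at hw ⊢
    rw [← Module.End.mul_apply, hfg.eq, Module.End.mul_apply, hw, map_zero]
  have : Nontrivial (LinearMap.ker f) := nontrivial_of_ne ⟨v, hv⟩ 0 (by simpa using hv0)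
  obtain ⟨μ, hμ⟩ := Module.End.exists_eigenvalue (g.restrict hmaps)
  obtain ⟨⟨w, hw⟩, hwμ⟩ := hμ.exists_hasEigenvector
  refine ⟨μ, w, hw, Module.End.hasEigenvector_iff.mpr ⟨?_, ?_⟩⟩
  · rw [Module.End.mem_eigenspace_iff]
    exact congrArg Subtype.val hwμ.apply_eq_smul
  · simpa using hwμ.right

variable {m n q : Type*} [Fintype n] [Fintype q]

namespace Matrix

theorem eq_zero_of_mul_eq_zero_of_isUnit_det [DecidableEq n] {R : Type*} [CommRing R]
    {M : Matrix n n R} (hM : IsUnit M.det) {X : Matrix n m R} (h : M * X = 0) : X = 0 := by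
  rw [← nonsing_inv_mul_cancel_left (A := M) X hM, h, Matrix.mul_zero]

theorem eq_zero_of_mul_eq_zero_of_isUnit_det_right [DecidableEq q] {R : Type*} [CommRing R]
    {M : Matrix q q R} (hM : IsUnit M.det) {X : Matrix m q R} (h : X * M = 0) : X = 0 := by
  rw [← mul_nonsing_inv_cancel_right (A := M) X hM, h, Matrix.zero_mul]

theorem mem_spectrum_of_mul_eq_smul [DecidableEq q] {K : Type*} [Field K] {X : Matrix m q K}
    {S : Matrix q q K} {μ : K} (hX : X ≠ 0) (h : X * S = μ • X) : μ ∈ spectrum K S := by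
  rw [spectrum.mem_iff, Matrix.isUnit_iff_isUnit_det]
  refine fun hdet => hX (eq_zero_of_mul_eq_zero_of_isUnit_det_right hdet ?_)
  rw [Algebra.algebraMap_eq_smul_one, Matrix.mul_sub, Matrix.mul_smul, Matrix.mul_one, h,
    sub_self]

theorem mul_pow_of_mul_eq_smul [DecidableEq q] {R : Type*} [CommSemiring R] {X : Matrix m q R}
    {S : Matrix q q R} {μ : R} (h : X * S = μ • X) (k : ℕ) : X * S ^ k = μ ^ k • X := by
  induction k with
  | zero => simp
  | succ k ih => rw [pow_succ, ← Matrix.mul_assoc, ih, Matrix.smul_mul, h, smul_smul, pow_succ]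

theorem mul_exp_of_mul_eq_smul [DecidableEq q] {𝕂 : Type*} [RCLike 𝕂] {X : Matrix m q 𝕂}
    {S : Matrix q q 𝕂} {μ : 𝕂} (h : X * S = μ • X) : X * exp S = exp μ • X := by
  open scoped Norms.Operator in
  have hS := (exp_series_hasSum_exp' (𝕂 := 𝕂) S).map (mulLeftLinearMap q 𝕂 X)
    (continuous_const.matrix_mul continuous_id)
  have hμ := (exp_series_hasSum_exp' (𝕂 := 𝕂) μ).smul_const X
  refine hS.unique (hμ.congr_fun fun k => ?_)
  simp only [Function.comp_apply, mulLeftLinearMap_apply, Matrix.mul_smul,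
    mul_pow_of_mul_eq_smul h, smul_smul, smul_eq_mul]

theorem map_exp [DecidableEq q] {𝕂 𝕃 : Type*} [RCLike 𝕂] [NormedRing 𝕃] [Algebra ℚ 𝕃]
    (f : 𝕂 →+* 𝕃) (hf : Continuous f) (M : Matrix q q 𝕂) : (exp M).map f = exp (M.map f) := by
  open scoped Norms.Operator in
  exact NormedSpace.map_exp (𝔸 := Matrix q q 𝕂) (𝔹 := Matrix q q 𝕃) f.mapMatrix
    (continuous_id.matrix_map hf) M

end Matrix

section DelaySylvester

variable {R : Type*} [CommRing R]

def delaySylvester (A₀ A₁ : Matrix n n R) (S E : Matrix q q R) : Module.End R (Matrix n q R) :=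
  mulRightLinearMap n R S - mulLeftLinearMap q R A₀ -
    mulRightLinearMap n R E ∘ₗ mulLeftLinearMap q R A₁

@[simp]
theorem delaySylvester_apply (A₀ A₁ : Matrix n n R) (S E : Matrix q q R) (X : Matrix n q R) :
    delaySylvester A₀ A₁ S E X = X * S - A₀ * X - A₁ * X * E :=
  rfl

theorem commute_delaySylvester_mulRightLinearMap {A₀ A₁ : Matrix n n R} {S E : Matrix q q R}
    (hSE : Commute S E) :
    Commute (delaySylvester A₀ A₁ S E) (mulRightLinearMap n R S) := by
  ext1 X
  simp only [Module.End.mul_apply, delaySylvester_apply, mulRightLinearMap_apply,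
    Matrix.sub_mul, Matrix.mul_assoc, hSE.eq]

theorem map_delaySylvester {R' : Type*} [CommRing R'] (f : R →+* R') (A₀ A₁ : Matrix n n R)
    (S E : Matrix q q R) (X : Matrix n q R) :
    (delaySylvester A₀ A₁ S E X).map f =
      delaySylvester (A₀.map f) (A₁.map f) (S.map f) (E.map f) (X.map f) := by
  simp only [delaySylvester_apply, Matrix.map_sub _ (map_sub f), Matrix.map_mul]

theorem delaySylvester_injective_of_map {R' : Type*} [CommRing R'] {f : R →+* R'}
    (hf : Function.Injective f) {A₀ A₁ : Matrix n n R} {S E : Matrix q q R}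
    (h : Function.Injective (delaySylvester (A₀.map f) (A₁.map f) (S.map f) (E.map f))) :
    Function.Injective (delaySylvester A₀ A₁ S E) := fun X Y hXY =>
  Matrix.map_injective hf <| h <| by rw [← map_delaySylvester, ← map_delaySylvester, hXY]

theorem delaySylvester_exp_injective [DecidableEq n] [DecidableEq q] (A₀ A₁ : Matrix n n ℂ)
    (S : Matrix q q ℂ) (τ : ℂ)
    (h : ∀ μ ∈ spectrum ℂ S, (μ • (1 : Matrix n n ℂ) - A₀ - Complex.exp (-μ * τ) • A₁).det ≠ 0) :
    Function.Injective (delaySylvester A₀ A₁ S (exp (-τ • S))) := by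
  rw [← LinearMap.ker_eq_bot, Submodule.eq_bot_iff]
  intro Y hY
  by_contra hY0
  have hSE : Commute S (exp (-τ • S)) := ((Commute.refl S).smul_right _).exp_right
  obtain ⟨μ, X, hXker, hX⟩ := Module.End.exists_hasEigenvector_mem_ker_of_commute
    (commute_delaySylvester_mulRightLinearMap hSE) hY hY0
  have hXS : X * S = μ • X := hX.apply_eq_smul
  have hXE : X * exp (-τ • S) = Complex.exp (-μ * τ) • X := by
    rw [mul_exp_of_mul_eq_smul (μ := -τ * μ) (by rw [Matrix.mul_smul, hXS, smul_smul]),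
      ← Complex.exp_eq_exp_ℂ, neg_mul, neg_mul, mul_comm]
  have hdet := h μ (mem_spectrum_of_mul_eq_smul hX.right hXS)
  refine hX.right (eq_zero_of_mul_eq_zero_of_isUnit_det (isUnit_iff_ne_zero.mpr hdet) ?_)
  have hL := LinearMap.mem_ker.mp hXker
  rw [delaySylvester_apply, Matrix.mul_assoc A₁, hXE, hXS, Matrix.mul_smul] at hL
  rwa [Matrix.sub_mul, Matrix.sub_mul, Matrix.smul_mul, Matrix.smul_mul, Matrix.one_mul]

end DelaySylvester

theorem stmt2_general {n q : ℕ} (A₀ A₁ : Matrix (Fin n) (Fin n) ℝ)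
    (S : Matrix (Fin q) (Fin q) ℝ) (τ : ℝ)
    (hS : ∀ μ ∈ spectrum ℂ (S.map (algebraMap ℝ ℂ)), μ.re = 0)
    (hstab : ∀ lam : ℂ, 0 ≤ lam.re →
      (lam • (1 : Matrix (Fin n) (Fin n) ℂ) - A₀.map (algebraMap ℝ ℂ)
        - Complex.exp (-lam * τ) • A₁.map (algebraMap ℝ ℂ)).det ≠ 0)
    (B : Matrix (Fin n) (Fin q) ℝ) :
    ∃! X : Matrix (Fin n) (Fin q) ℝ,
      X * S = A₀ * X + A₁ * X * NormedSpace.exp (-τ • S) + B := by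
  have hinj : Function.Injective (delaySylvester A₀ A₁ S (exp (-τ • S))) := by
    refine delaySylvester_injective_of_map (algebraMap ℝ ℂ).injective ?_
    rw [Matrix.map_exp _ Complex.continuous_ofReal, Matrix.map_smul' _ _ _ (map_mul _),
      map_neg, Complex.coe_algebraMap]
    exact delaySylvester_exp_injective _ _ _ τ fun μ hμ => hstab μ (hS μ hμ).ge
  have hbij : Function.Bijective (delaySylvester A₀ A₁ S (exp (-τ • S))) :=
    ⟨hinj, LinearMap.injective_iff_surjective.mp hinj⟩
  convert hbij.existsUnique B using 2 with X
  rw [delaySylvester_apply, sub_sub, sub_eq_iff_eq_add', add_assoc]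

/-- if all eigenvalues of `S` lie on the imaginary axis and the delay
system with matrices `A₀, A₁` and delay `τ` is exponentially stable (its
characteristic function `det(λI − A₀ − A₁ e^{−λτ})` has no root with `Re λ ≥ 0`),
then for any `B` the Sylvester-type equation `X S = A₀ X + A₁ X e^{−Sτ} + B`
has a unique solution `X`. -/
theorem stmt2 {n q : ℕ} (A₀ A₁ : Matrix (Fin n) (Fin n) ℝ)
    (S : Matrix (Fin q) (Fin q) ℝ) (τ : ℝ) (hτ : 0 ≤ τ)
    (hS : ∀ μ ∈ spectrum ℂ (S.map (algebraMap ℝ ℂ)), μ.re = 0)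
    (hstab : ∀ lam : ℂ, 0 ≤ lam.re →
      (lam • (1 : Matrix (Fin n) (Fin n) ℂ) - A₀.map (algebraMap ℝ ℂ)
        - Complex.exp (-lam * τ) • A₁.map (algebraMap ℝ ℂ)).det ≠ 0)
    (B : Matrix (Fin n) (Fin q) ℝ) :
    ∃! X : Matrix (Fin n) (Fin q) ℝ,
      X * S = A₀ * X + A₁ * X * NormedSpace.exp (-τ • S) + B :=
  stmt2_general A₀ A₁ S τ hS hstab B
end

section
/- Let (A,B) be stabilizable and (C,A) have the property that rank[[A−λI, B],[C, 0]] = n+p for every eigenvalue λ of S, and let (G₁,G₂) be the minimal p-copy internal model of S with G₂ of full column rank structure as in the definition. Then the augmented pair ( [[A,0],[G₂C,G₁]], [[B],[0]] ) is stabilizable. -/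
/-!
A vector `(x, z)` in the left kernel of the augmented PBH matrix at `λ` satisfies
`z (G₁ - λ) = 0`, `x (A - λ) + z G₂ C = 0` and `x B = 0`. If `λ` is not an eigenvalue of `β`,
then `G₁ - λ` is invertible, so `z = 0`, and stabilizability of `(A, B)` gives `x = 0`. If it is,
then `λ` is an eigenvalue of `S`, because `charpoly β = minpoly S` divides `charpoly S`. Writing
`u` for the outputs `z_k σ` of the `p` copies, `(x, u)` lies in the left kernel of the Rosenbrock
matrix of `(A, B, C)` at `λ`, so `x = 0` and `u = 0`; then every copy `z_k` is a left eigenvector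
of `β` annihilating `σ`, which controllability of `(β, σ)` rules out.
-/

open Matrix

theorem Matrix.rank_eq_card_iff_vecMul_eq_zero {K m n : Type*} [Field K] [Fintype m]
    [Fintype n] (M : Matrix m n K) :
    M.rank = Fintype.card m ↔ ∀ v : m → K, v ᵥ* M = 0 → v = 0 := by
  rw [rank_eq_finrank_span_row, ← Set.finrank, eq_comm,
    ← linearIndependent_iff_card_eq_finrank_span, ← vecMul_injective_iff, ← coe_vecMulLinear,
    injective_iff_map_eq_zero]
  rfl

theorem Matrix.vecMul_pow_of_vecMul_eq_smul {R n : Type*} [CommSemiring R] [Fintype n]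
    [DecidableEq n] {M : Matrix n n R} {c : R} {v : n → R} (h : v ᵥ* M = c • v) (j : ℕ) :
    v ᵥ* M ^ j = c ^ j • v := by
  induction j with
  | zero => simp
  | succ j ih => rw [pow_succ, ← vecMul_vecMul, ih, smul_vecMul, h, smul_smul, pow_succ]

theorem Matrix.eq_zero_of_vecMul_eq_smul_of_notMem_spectrum {K n : Type*} [Field K] [Fintype n]
    [DecidableEq n] {M : Matrix n n K} {c : K} (hc : c ∉ spectrum K M) {v : n → K}
    (hv : v ᵥ* M = c • v) : v = 0 := by
  rw [spectrum.mem_iff, not_not, Algebra.algebraMap_eq_smul_one] at hc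
  refine vecMul_injective_of_isUnit hc (?_ : v ᵥ* (c • 1 - M) = 0 ᵥ* (c • 1 - M))
  rw [vecMul_sub, vecMul_smul, vecMul_one, hv, sub_self, zero_vecMul]

theorem Matrix.spectrum_map_subset_of_charpoly_dvd {K L m n : Type*} [Field K] [Field L]
    [Algebra K L] [Fintype m] [DecidableEq m] [Fintype n] [DecidableEq n] {M : Matrix m m K}
    {N : Matrix n n K} (h : M.charpoly ∣ N.charpoly) :
    spectrum L (M.map (algebraMap K L)) ⊆ spectrum L (N.map (algebraMap K L)) := by
  intro c hc
  rw [mem_spectrum_iff_isRoot_charpoly, charpoly_map] at hc ⊢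
  exact Polynomial.IsRoot.dvd hc (Polynomial.map_dvd _ h)

theorem Matrix.vecMul_blockDiagonal_apply {R m n o : Type*} [NonUnitalNonAssocSemiring R]
    [Fintype m] [Fintype o] [DecidableEq o] (v : m × o → R) (M : o → Matrix m n R) (j : n) (k : o) :
    (v ᵥ* blockDiagonal M) (j, k) = ((fun i => v (i, k)) ᵥ* M k) j := by
  simp only [vecMul, dotProduct, blockDiagonal_apply, Fintype.sum_prod_type, mul_ite, mul_zero]
  rw [Finset.sum_comm]
  simp

theorem Matrix.vecMul_blockDiagonal_eq_zero_iff {R m n o : Type*} [NonUnitalNonAssocSemiring R]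
    [Fintype m] [Fintype o] [DecidableEq o] (v : m × o → R) (M : o → Matrix m n R) :
    v ᵥ* blockDiagonal M = 0 ↔ ∀ k, (fun i => v (i, k)) ᵥ* M k = 0 := by
  simp only [funext_iff, Prod.forall, Pi.zero_apply, vecMul_blockDiagonal_apply]
  exact forall_comm

theorem Matrix.vecMul_blockDiagonal_vecMul_submatrix_snd {R m n o ι : Type*}
    [NonUnitalNonAssocSemiring R] [Fintype m] [Fintype n] [Unique n] [Fintype o] [DecidableEq o]
    (v : m × o → R) (M : o → Matrix m n R) (C : Matrix o ι R) :
    v ᵥ* blockDiagonal M ᵥ* C.submatrix Prod.snd id =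
      (fun k => ((fun i => v (i, k)) ᵥ* M k) default) ᵥ* C := by
  ext j
  rw [vecMul, dotProduct, Fintype.sum_prod_type]
  simp only [Fintype.sum_unique, vecMul_blockDiagonal_apply, submatrix_apply, id]
  rfl

theorem IsControllablePair.eq_zero_of_vecMul_eq {L : Type*} [Field L] [Algebra ℝ L] {nβ : ℕ}
    {β : Matrix (Fin nβ) (Fin nβ) ℝ} {σ : Matrix (Fin nβ) (Fin 1) ℝ} (h : IsControllablePair β σ)
    {c : L} {w : Fin nβ → L} (hβ : w ᵥ* β.map (algebraMap ℝ L) = c • w)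
    (hσ : w ᵥ* σ.map (algebraMap ℝ L) = 0) : w = 0 := by
  set f := algebraMap ℝ L
  set W : Matrix (Fin nβ) (Fin nβ) ℝ := .of fun i j => ((β ^ (j : ℕ)) * σ) i 0
  have hW : IsUnit W := by
    rw [← vecMul_injective_iff_isUnit, ← coe_vecMulLinear, injective_iff_map_eq_zero]
    exact (rank_eq_card_iff_vecMul_eq_zero W).mp (by rw [Fintype.card_fin]; exact h)
  have hcol (j : Fin nβ) :
      (w ᵥ* W.map f) j = (w ᵥ* β.map f ^ (j : ℕ) ᵥ* σ.map f) 0 := by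
    rw [vecMul_vecMul, ← f.mapMatrix_apply β, ← map_pow, RingHom.mapMatrix_apply,
      ← Matrix.map_mul]
    rfl
  refine vecMul_injective_of_isUnit (hW.map f.mapMatrix) (?_ : w ᵥ* W.map f = 0 ᵥ* W.map f)
  ext j
  rw [hcol, vecMul_pow_of_vecMul_eq_smul hβ, smul_vecMul, hσ, zero_vecMul]
  simp

theorem Matrix.rank_augmented_eq_of_pbh {L ι μ κ r ν : Type*} [Field L] [Fintype ι] [Fintype μ]
    [Fintype κ] [DecidableEq κ] [Fintype r] [DecidableEq r] [Fintype ν] [Unique ν]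
    {P : Matrix ι ι L} {B : Matrix ι μ L} {C : Matrix κ ι L} {β : Matrix r r L}
    {σ : Matrix r ν L} {c : L}
    (hpbh : ∀ w : r → L, w ᵥ* β = c • w → w ᵥ* σ = 0 → w = 0)
    (hstab : (fromCols P B).rank = Fintype.card ι)
    (hzero : c ∈ spectrum L β → (fromBlocks P B C 0).rank = Fintype.card ι + Fintype.card κ) :
    (fromCols
      (fromBlocks P 0 (blockDiagonal (fun _ : κ => σ) * C.submatrix (Prod.snd : ν × κ → κ) id)
        (blockDiagonal fun _ => β - c • 1))
      (fromRows B 0)).rank = Fintype.card ι + Fintype.card r * Fintype.card κ := by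
  rw [← Fintype.card_prod, ← Fintype.card_sum, rank_eq_card_iff_vecMul_eq_zero]
  intro v hv
  obtain ⟨x, z, rfl⟩ : ∃ x z, v = Sum.elim x z := ⟨_, _, (Sum.elim_comp_inl_inr v).symm⟩
  simp only [vecMul_fromCols, vecMul_fromBlocks, sumElim_vecMul_fromRows, Sum.elim_comp_inl,
    Sum.elim_comp_inr, ← Sum.elim_zero_zero, Sum.elim_eq_iff, vecMul_zero, zero_add, add_zero] at hv
  obtain ⟨⟨hxz, hz⟩, hxB⟩ := hv
  rw [← vecMul_vecMul, vecMul_blockDiagonal_vecMul_submatrix_snd] at hxz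
  rw [vecMul_blockDiagonal_eq_zero_iff] at hz
  set u : κ → L := fun k => ((fun i => z (i, k)) ᵥ* σ) default
  have hzβ (k : κ) : (fun i => z (i, k)) ᵥ* β = c • fun i => z (i, k) := by
    rw [← sub_eq_zero, ← hz k, vecMul_sub, vecMul_smul, vecMul_one]
  by_cases hc : c ∈ spectrum L β
  · have hxu : Sum.elim x u = 0 := (rank_eq_card_iff_vecMul_eq_zero _).mp
      (by rw [hzero hc, Fintype.card_sum]) _ (by simp [vecMul_fromBlocks, hxz, hxB])
    obtain ⟨rfl, hu⟩ := Sum.elim_eq_iff.mp (hxu.trans Sum.elim_zero_zero.symm)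
    obtain rfl : z = 0 := by
      ext ⟨i, k⟩
      refine congr_fun (hpbh _ (hzβ k) ?_) i
      ext j
      rw [Subsingleton.elim j default]
      exact congr_fun hu k
    exact Sum.elim_zero_zero
  · obtain rfl : z = 0 := by
      ext ⟨i, k⟩
      exact congr_fun (eq_zero_of_vecMul_eq_smul_of_notMem_spectrum hc (hzβ k)) i
    have hxP : x ᵥ* P = 0 := by simpa [u, ← Pi.zero_def] using hxz
    obtain rfl : x = 0 := (rank_eq_card_iff_vecMul_eq_zero _).mp hstab _
      (by rw [vecMul_fromCols, hxP, hxB, Sum.elim_zero_zero])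
    exact Sum.elim_zero_zero

theorem stmt3_general {n m p q nβ : ℕ}
    (A : Matrix (Fin n) (Fin n) ℝ) (B : Matrix (Fin n) (Fin m) ℝ)
    (C : Matrix (Fin p) (Fin n) ℝ) (S : Matrix (Fin q) (Fin q) ℝ)
    (β : Matrix (Fin nβ) (Fin nβ) ℝ) (σ : Matrix (Fin nβ) (Fin 1) ℝ)
    (hctrb : IsControllablePair β σ)
    (hmin : β.charpoly = minpoly ℝ S)
    (hstab : ∀ lam : ℂ, 0 ≤ lam.re →
      (Matrix.fromCols (A.map (algebraMap ℝ ℂ) - lam • 1) (B.map (algebraMap ℝ ℂ))).rank = n)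
    (hrank : ∀ lam ∈ spectrum ℂ (S.map (algebraMap ℝ ℂ)),
      (Matrix.fromBlocks (A.map (algebraMap ℝ ℂ) - lam • 1) (B.map (algebraMap ℝ ℂ))
        (C.map (algebraMap ℝ ℂ)) 0).rank = n + p)
    (G₁ : Matrix (Fin nβ × Fin p) (Fin nβ × Fin p) ℝ)
    (G₂ : Matrix (Fin nβ × Fin p) (Fin 1 × Fin p) ℝ)
    (hG₁ : G₁ = Matrix.blockDiagonal fun _ : Fin p => β)
    (hG₂ : G₂ = Matrix.blockDiagonal fun _ : Fin p => σ) :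
    ∀ lam : ℂ, 0 ≤ lam.re →
      (Matrix.fromCols
        (Matrix.fromBlocks (A.map (algebraMap ℝ ℂ) - lam • 1) 0
          ((G₂.map (algebraMap ℝ ℂ)) *
            (Matrix.of fun (ip : Fin 1 × Fin p) j => C ip.2 j).map (algebraMap ℝ ℂ))
          (G₁.map (algebraMap ℝ ℂ) - lam • 1))
        (Matrix.fromRows (B.map (algebraMap ℝ ℂ)) 0)).rank = n + nβ * p := by
  intro lam hlam
  set f := algebraMap ℝ ℂ
  have hG₁c : G₁.map f - lam • 1 = blockDiagonal fun _ => β.map f - lam • 1 := by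
    rw [show (fun _ : Fin p => β.map f - lam • 1) = (fun _ => β.map f) - lam • 1 from rfl,
      hG₁, blockDiagonal_map _ _ (map_zero f), blockDiagonal_sub, blockDiagonal_smul,
      blockDiagonal_one]
  have hG₂c : G₂.map f * (of fun (ip : Fin 1 × Fin p) j => C ip.2 j).map f =
      (blockDiagonal fun _ => σ.map f) * (C.map f).submatrix Prod.snd id := by
    rw [hG₂, blockDiagonal_map _ _ (map_zero f)]
    rfl
  have hmin_dvd : β.charpoly ∣ S.charpoly := hmin ▸ minpoly.dvd ℝ S (aeval_self_charpoly S)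
  rw [hG₁c, hG₂c]
  have h := rank_augmented_eq_of_pbh (C := C.map f) (fun _ => hctrb.eq_zero_of_vecMul_eq)
    (by simpa only [Fintype.card_fin] using hstab lam hlam)
    (fun hc => by
      simpa only [Fintype.card_fin] using
        hrank lam (spectrum_map_subset_of_charpoly_dvd hmin_dvd hc))
  simp only [Fintype.card_fin] at h
  exact h

/-- if `(A,B)` is stabilizable, the transmission-zero rank condition
holds at every eigenvalue of `S`, and `(G₁,G₂)` is the minimal p-copy internal model
of `S` (whose eigenvalues all lie on the imaginary axis), then the augmented pair
`([[A,0],[G₂C,G₁]], [[B],[0]])` is stabilizable. -/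
theorem stmt3 {n m p q nβ : ℕ}
    (A : Matrix (Fin n) (Fin n) ℝ) (B : Matrix (Fin n) (Fin m) ℝ)
    (C : Matrix (Fin p) (Fin n) ℝ) (S : Matrix (Fin q) (Fin q) ℝ)
    (β : Matrix (Fin nβ) (Fin nβ) ℝ) (σ : Matrix (Fin nβ) (Fin 1) ℝ)
    (hctrb : IsControllablePair β σ)
    (hmin : β.charpoly = minpoly ℝ S)
    (hSiR : ∀ μ ∈ spectrum ℂ (S.map (algebraMap ℝ ℂ)), μ.re = 0)
    (hstab : ∀ lam : ℂ, 0 ≤ lam.re →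
      (Matrix.fromCols (A.map (algebraMap ℝ ℂ) - lam • 1) (B.map (algebraMap ℝ ℂ))).rank = n)
    (hrank : ∀ lam ∈ spectrum ℂ (S.map (algebraMap ℝ ℂ)),
      (Matrix.fromBlocks (A.map (algebraMap ℝ ℂ) - lam • 1) (B.map (algebraMap ℝ ℂ))
        (C.map (algebraMap ℝ ℂ)) 0).rank = n + p)
    (G₁ : Matrix (Fin nβ × Fin p) (Fin nβ × Fin p) ℝ)
    (G₂ : Matrix (Fin nβ × Fin p) (Fin 1 × Fin p) ℝ)
    (hG₁ : G₁ = Matrix.blockDiagonal fun _ : Fin p => β)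
    (hG₂ : G₂ = Matrix.blockDiagonal fun _ : Fin p => σ) :
    ∀ lam : ℂ, 0 ≤ lam.re →
      (Matrix.fromCols
        (Matrix.fromBlocks (A.map (algebraMap ℝ ℂ) - lam • 1) 0
          ((G₂.map (algebraMap ℝ ℂ)) *
            (Matrix.of fun (ip : Fin 1 × Fin p) j => C ip.2 j).map (algebraMap ℝ ℂ))
          (G₁.map (algebraMap ℝ ℂ) - lam • 1))
        (Matrix.fromRows (B.map (algebraMap ℝ ℂ)) 0)).rank = n + nβ * p :=
  stmt3_general A B C S β σ hctrb hmin hstab hrank G₁ G₂ hG₁ hG₂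
end

section
/- Let H ∈ R^{N×N} be the lower-right block of the Laplacian of a digraph Ḡ on {0,1,…,N}. Then all eigenvalues of H have positive real part if and only if Ḡ contains a directed spanning tree with node 0 as the root. -/
/-!
Extend an eigenvector `v` of `H` by `0` at the root: it then satisfies the Laplacian eigenvalue
equation at every other node. If `Re μ ≤ 0`, then at a node where `‖v‖` is maximal the equation
`(d - μ) v_i = ∑ a_ik v_k` with `‖d - μ‖ ≥ d = ∑ a_ik` forces `‖v‖` to be maximal at every
in-neighbour as well. Following a path from the root backwards, the maximum is attained at the
root, where the vector vanishes. Conversely, if some node is unreachable, the rows of `H` indexed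
by the unreachable nodes vanish outside that set and sum to zero on it, so `H` is block triangular
with a singular diagonal block and `0` is an eigenvalue.
-/

open Matrix Finset

section Laplacian

variable {ι R : Type*} [Fintype ι] [DecidableEq ι]

def laplacian [Ring R] (a : ι → ι → R) : Matrix ι ι R :=
  of fun i j => if i = j then ∑ k ∈ univ.erase i, a i k else -a i j

theorem laplacian_mulVec_apply [CommRing R] (a : ι → ι → R) (w : ι → R) (i : ι) :
    (laplacian a *ᵥ w) i = ∑ k ∈ univ.erase i, a i k * (w i - w k) := by
  have hoff : ∀ k ∈ univ.erase i, laplacian a i k * w k = -(a i k * w k) := fun k hk => by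
    simp [laplacian, (ne_of_mem_erase hk).symm]
  rw [mulVec, dotProduct, ← add_sum_erase _ _ (mem_univ i), sum_congr rfl hoff]
  simp only [laplacian, of_apply, if_true, mul_sub, sum_sub_distrib, sum_mul, sum_neg_distrib]
  ring

theorem sum_laplacian_apply [CommRing R] (a : ι → ι → R) (i : ι) :
    ∑ j, laplacian a i j = 0 := by
  simpa [mulVec, dotProduct] using laplacian_mulVec_apply a 1 i

theorem laplacian_map {S : Type*} [CommRing R] [CommRing S] (f : R →+* S) (a : ι → ι → R) :
    (laplacian a).map f = laplacian fun i j => f (a i j) := by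
  ext i j
  by_cases h : i = j <;> simp [laplacian, h, map_sum]

end Laplacian

theorem Relation.ReflTransGen.closed' {α : Type*} {r : α → α → Prop} {P : α → Prop}
    (dc : ∀ {a b}, r a b → P b → P a) {a b : α} (h : ReflTransGen r a b) : P b → P a := by
  induction h with
  | refl => exact id
  | tail _ hbc ih => exact ih ∘ dc hbc

theorem Matrix.exists_mulVec_eq_smul_of_mem_spectrum {n K : Type*} [Fintype n] [DecidableEq n]
    [Field K] {A : Matrix n n K} {μ : K} (h : μ ∈ spectrum K A) : ∃ v ≠ 0, A *ᵥ v = μ • v := by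
  rw [← spectrum_toLin', ← Module.End.hasEigenvalue_iff_mem_spectrum] at h
  obtain ⟨v, hv⟩ := h.exists_hasEigenvector
  exact ⟨v, hv.2, Module.End.mem_eigenspace_iff.1 hv.1⟩

theorem Matrix.det_eq_zero_of_sum_block_eq_zero {n R : Type*} [Fintype n] [DecidableEq n]
    [CommRing R] [IsDomain R] (M : Matrix n n R) (p : n → Prop) [DecidablePred p]
    (hp : ∃ i, p i) (hblock : ∀ i, p i → ∀ j, ¬p j → M i j = 0)
    (hsum : ∀ i, p i → ∑ j, M i j = 0) : M.det = 0 := by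
  obtain ⟨i₀, hi₀⟩ := hp
  have hdet : (toSquareBlockProp M p).det = 0 := by
    refine exists_mulVec_eq_zero_iff.1 ⟨1, fun h => one_ne_zero (congrFun h ⟨i₀, hi₀⟩), ?_⟩
    funext i
    rw [Pi.zero_apply, ← hsum i i.2, ← Fintype.sum_subtype_add_sum_subtype p,
      Fintype.sum_eq_zero (fun j : {j // ¬p j} => M i j) fun j => hblock i i.2 j j.2]
    simp [mulVec, dotProduct, toSquareBlockProp, toBlock]
  rw [twoBlockTriangular_det' M p hblock, hdet, zero_mul]

section MaximumPrinciple

variable {ι : Type*} [Fintype ι] [DecidableEq ι]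

theorem norm_eq_of_laplacian_mulVec_apply_eq (a : ι → ι → ℝ) (ha : ∀ i j, 0 ≤ a i j)
    {μ : ℂ} (hμ : μ.re ≤ 0) {w : ι → ℂ} {i : ι}
    (hi : ((laplacian a).map (algebraMap ℝ ℂ) *ᵥ w) i = μ * w i)
    (hmax : ∀ j, ‖w j‖ ≤ ‖w i‖) {j : ι} (hij : 0 < a i j) : ‖w j‖ = ‖w i‖ := by
  set E := univ.erase i
  rw [laplacian_map, laplacian_mulVec_apply] at hi
  have hrow : ((∑ k ∈ E, a i k : ℝ) - μ) * w i = ∑ k ∈ E, (a i k : ℂ) * w k := by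
    simp only [Complex.coe_algebraMap, mul_sub, sum_sub_distrib] at hi
    push_cast
    rw [sub_mul, sum_mul]
    linear_combination hi
  have hdeg : ∑ k ∈ E, a i k ≤ ‖((∑ k ∈ E, a i k : ℝ) : ℂ) - μ‖ := by
    have := Complex.re_le_norm (((∑ k ∈ E, a i k : ℝ) : ℂ) - μ)
    rw [Complex.sub_re, Complex.ofReal_re] at this
    linarith
  have hle : ∑ k ∈ E, a i k * ‖w i‖ ≤ ∑ k ∈ E, a i k * ‖w k‖ := calc
    ∑ k ∈ E, a i k * ‖w i‖ = (∑ k ∈ E, a i k) * ‖w i‖ := (sum_mul ..).symm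
    _ ≤ ‖((∑ k ∈ E, a i k : ℝ) : ℂ) - μ‖ * ‖w i‖ := by gcongr
    _ = ‖∑ k ∈ E, (a i k : ℂ) * w k‖ := by rw [← norm_mul, hrow]
    _ ≤ ∑ k ∈ E, ‖(a i k : ℂ) * w k‖ := norm_sum_le ..
    _ = ∑ k ∈ E, a i k * ‖w k‖ := by
      simp only [norm_mul, Complex.norm_real, Real.norm_of_nonneg (ha i _)]
  have hslack : ∀ k ∈ E, a i k * (‖w i‖ - ‖w k‖) = 0 := by
    refine (sum_eq_zero_iff_of_nonneg fun k _ => ?_).1 (le_antisymm ?_ (sum_nonneg fun k _ => ?_))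
    all_goals first
      | simpa only [mul_sub, sum_sub_distrib, sub_nonpos] using hle
      | exact mul_nonneg (ha i k) (sub_nonneg.2 (hmax k))
  rcases eq_or_ne j i with rfl | hji
  · rfl
  have := hslack j (mem_erase.2 ⟨hji, mem_univ j⟩)
  rw [mul_eq_zero, sub_eq_zero] at this
  exact (this.resolve_left hij.ne').symm

theorem laplacian_eigenvector_eq_zero (a : ι → ι → ℝ) (ha : ∀ i j, 0 ≤ a i j) {r : ι}
    (hreach : ∀ i, Relation.ReflTransGen (fun j i => 0 < a i j) r i) {μ : ℂ} (hμ : μ.re ≤ 0)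
    {w : ι → ℂ} (hw : ∀ i ≠ r, ((laplacian a).map (algebraMap ℝ ℂ) *ᵥ w) i = μ * w i)
    (hr : w r = 0) : w = 0 := by
  have : Nonempty ι := ⟨r⟩
  obtain ⟨i₀, hi₀⟩ := Finite.exists_max fun i => ‖w i‖
  have hclosed : ∀ {j i}, 0 < a i j → ‖w i‖ = ‖w i₀‖ → ‖w j‖ = ‖w i₀‖ := by
    intro j i hij hi
    rcases eq_or_ne i r with rfl | hir
    · rw [← hi, hr, norm_zero] at hi₀ ⊢
      exact le_antisymm (hi₀ j) (norm_nonneg _)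
    · rw [← hi] at hi₀ ⊢
      exact norm_eq_of_laplacian_mulVec_apply_eq a ha hμ (hw i hir) hi₀ hij
  have hmax : ‖w i₀‖ = 0 := by
    rw [← (hreach i₀).closed' (fun hji => hclosed hji) rfl, hr, norm_zero]
  funext j
  exact norm_le_zero_iff.1 (hmax ▸ hi₀ j)

end MaximumPrinciple

section GroundedLaplacian

variable {N : ℕ} (a : Fin (N + 1) → Fin (N + 1) → ℝ)

theorem re_pos_of_mem_spectrum_of_reachable (ha : ∀ i j, 0 ≤ a i j)
    (hreach : ∀ i, Relation.ReflTransGen (fun j i => 0 < a i j) 0 i) {μ : ℂ}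
    (hμ : μ ∈ spectrum ℂ (((laplacian a).submatrix Fin.succ Fin.succ).map (algebraMap ℝ ℂ))) :
    0 < μ.re := by
  by_contra! hre
  obtain ⟨v, hv, hHv⟩ := exists_mulVec_eq_smul_of_mem_spectrum hμ
  refine hv (funext fun j => ?_)
  have hext := laplacian_eigenvector_eq_zero a ha hreach hre (w := Fin.cons 0 v) ?_ rfl
  · simpa using congrFun hext j.succ
  intro i hi
  obtain ⟨k, rfl⟩ := Fin.exists_succ_eq.2 hi
  simpa [mulVec, dotProduct, Fin.sum_univ_succ] using congrFun hHv k

theorem det_eq_zero_of_not_reachable (ha : ∀ i j, 0 ≤ a i j) {i : Fin (N + 1)}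
    (hi : ¬Relation.ReflTransGen (fun j i => 0 < a i j) 0 i) :
    ((laplacian a).submatrix Fin.succ Fin.succ).det = 0 := by
  classical
  set reach := Relation.ReflTransGen (fun j i => 0 < a i j) 0
  have hcut : ∀ i j, ¬reach i → reach j → a i j = 0 := fun i j hi hj =>
    le_antisymm (not_lt.1 fun h => hi (hj.tail h)) (ha i j)
  have hi0 : i ≠ 0 := by rintro rfl; exact hi .refl
  refine det_eq_zero_of_sum_block_eq_zero _ (fun k => ¬reach k.succ) ⟨i.pred hi0, by simpa⟩
    (fun k hk l hl => ?_) fun k hk => ?_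
  · have hkl : k ≠ l := by rintro rfl; exact hl hk
    simp [laplacian, hkl, hcut _ _ hk (not_not.1 hl)]
  · have := sum_laplacian_apply a k.succ
    rw [Fin.sum_univ_succ] at this
    simpa [laplacian, (Fin.succ_ne_zero k).symm, hcut _ _ hk .refl] using this

end GroundedLaplacian

theorem stmt19_general {N : ℕ} (a : Fin (N + 1) → Fin (N + 1) → ℝ)
    (hnonneg : ∀ i j, 0 ≤ a i j)
    (L : Matrix (Fin (N + 1)) (Fin (N + 1)) ℝ)
    (hL : ∀ i j, L i j = if i = j then ∑ k ∈ Finset.univ.erase i, a i k else -a i j)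
    (H : Matrix (Fin N) (Fin N) ℝ)
    (hH : ∀ i j : Fin N, H i j = L i.succ j.succ) :
    (∀ μ ∈ spectrum ℂ (H.map (algebraMap ℝ ℂ)), 0 < μ.re) ↔
      ∀ i : Fin (N + 1), Relation.ReflTransGen (fun j i => 0 < a i j) 0 i := by
  obtain rfl : H = (laplacian a).submatrix Fin.succ Fin.succ := by
    ext i j
    rw [hH, hL]
    rfl
  refine ⟨fun hspec i => ?_, fun hreach μ hμ =>
    re_pos_of_mem_spectrum_of_reachable a hnonneg hreach hμ⟩
  by_contra hi
  have hdet := (algebraMap ℝ ℂ).map_det ((laplacian a).submatrix Fin.succ Fin.succ)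
  rw [det_eq_zero_of_not_reachable a hnonneg hi, map_zero] at hdet
  have hzero : (0 : ℂ) ∈ spectrum ℂ (((laplacian a).submatrix Fin.succ Fin.succ).map
      (algebraMap ℝ ℂ)) := by
    rw [spectrum.zero_mem_iff, isUnit_iff_isUnit_det]
    exact hdet ▸ not_isUnit_zero
  simpa using hspec 0 hzero

/-- let `H` be the lower-right `N×N` block of the Laplacian of a
weighted digraph on `{0,1,…,N}` (node 0 having no incoming edges, edge `(j,i)`
present iff `a i j > 0`).  Then all eigenvalues of `H` have positive real part iff
the digraph contains a directed spanning tree rooted at node 0, i.e. every node is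
reachable from node 0. -/
theorem stmt19 {N : ℕ} (a : Fin (N + 1) → Fin (N + 1) → ℝ)
    (hnonneg : ∀ i j, 0 ≤ a i j) (hdiag : ∀ i, a i i = 0)
    (hroot : ∀ j, a 0 j = 0)
    (L : Matrix (Fin (N + 1)) (Fin (N + 1)) ℝ)
    (hL : ∀ i j, L i j = if i = j then ∑ k ∈ Finset.univ.erase i, a i k else -a i j)
    (H : Matrix (Fin N) (Fin N) ℝ)
    (hH : ∀ i j : Fin N, H i j = L i.succ j.succ) :
    (∀ μ ∈ spectrum ℂ (H.map (algebraMap ℝ ℂ)), 0 < μ.re) ↔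
      ∀ i : Fin (N + 1), Relation.ReflTransGen (fun j i => 0 < a i j) 0 i :=
  stmt19_general a hnonneg L hL H hH
end
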